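/- Let 0 < α < 1, 1 < β < 2, L > 0, and let d₊, d₋, e₊, e₋ ≥ 0 be real numbers with d₊ + d₋ + e₊ + e₋ > 0. There exists a constant c > 0, independent of N, such that for every integer N ≥ 3, with mesh size h = L/N, and every grid function v one has (δ^{α,β}_h v, v) ≤ −c · ln 2 · ‖v‖², where δ^{α,β}_h v = −d₊ δ^α_{x,+} v − d₋ δ^α_{x,-} v + e₊ δ^β_{x,+} v + e₋ δ^β_{x,-} v. -/

import Mathlib

/-!
Let `w` be the zero extension of `v` to `ℤ` and `C(d) = ∑ᵢ w(i + d) w(i)` its autocorrelation.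
Then `(δ^γ_{x,±} v, v) = h^{1-γ} ∑_{k ≤ N} ω_k C(1 - k)`, and `C` is even with maximum
`C(0) = ‖v‖² / h`. The weights `ω_k^{(γ)}` with `k ≥ 3`, and `ω_0 + ω_2`, all have the sign of
`γ - 1`, while `ω_1` multiplies `C(0)`; so replacing every `C(1 - k)` by `C(0)` bounds
`(δ^α v, v)` from below and `(δ^β v, v)` from above by `h^{-γ} (∑_{k ≤ N} ω_k) ‖v‖²`.
The partial sums of the `ω_k` are combinations of the products `∏_{j ≤ n} (1 - γ/j)`, which
Bernoulli's inequality compares with `n^{-γ}`; this gives `α(1-α)/2 · L^{-α}` and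
`(β-1)(2-β)²/2 · L^{-β}` as the constants.
-/

open Finset

/-- The coefficients `g_k^{(γ)}`: `g_0 = 1`, `g_k = (1 - (γ+1)/k) g_{k-1}` for `k ≥ 1`. -/
noncomputable def gcoef (γ : ℝ) : ℕ → ℝ
  | 0 => 1
  | k + 1 => (1 - (γ + 1) / (k + 1)) * gcoef γ k

/-- The coefficients `ω_k^{(γ)}`: `ω_0 = (γ/2) g_0` and
`ω_k = (γ/2) g_k + ((2-γ)/2) g_{k-1}` for `k ≥ 1`. -/
noncomputable def wcoef (γ : ℝ) : ℕ → ℝ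
  | 0 => γ / 2 * gcoef γ 0
  | k + 1 => γ / 2 * gcoef γ (k + 1) + (2 - γ) / 2 * gcoef γ k

/-- Discrete inner product `(u,v) = h ∑_{i=1}^{N-1} u_i v_i`. -/
noncomputable def ip (N : ℕ) (h : ℝ) (u v : ℕ → ℝ) : ℝ :=
  h * ∑ i ∈ Finset.Icc 1 (N - 1), u i * v i

/-- Discrete `L₂`-norm `‖v‖ = √(v,v)`. -/
noncomputable def gnorm (N : ℕ) (h : ℝ) (v : ℕ → ℝ) : ℝ :=
  Real.sqrt (ip N h v v)

/-- `(δ^γ_{x,+} v)_i = h^{-γ} ∑_{k=0}^{i+1} ω_k^{(γ)} v_{i-k+1}`. -/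
noncomputable def dplus (γ : ℝ) (h : ℝ) (v : ℕ → ℝ) (i : ℕ) : ℝ :=
  h ^ (-γ) * ∑ k ∈ Finset.range (i + 2), wcoef γ k * v (i + 1 - k)

/-- `(δ^γ_{x,-} v)_i = h^{-γ} ∑_{k=0}^{N-i+1} ω_k^{(γ)} v_{i+k-1}`. -/
noncomputable def dminus (γ : ℝ) (N : ℕ) (h : ℝ) (v : ℕ → ℝ) (i : ℕ) : ℝ :=
  h ^ (-γ) * ∑ k ∈ Finset.range (N - i + 2), wcoef γ k * v (i + k - 1)

/-- `δ^{α,β}_h v = -d₊ δ^α_{x,+} v - d₋ δ^α_{x,-} v + e₊ δ^β_{x,+} v + e₋ δ^β_{x,-} v`. -/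
noncomputable def dop (α β : ℝ) (N : ℕ) (h : ℝ) (dp dm ep em : ℝ) (v : ℕ → ℝ) (i : ℕ) : ℝ :=
  - dp * dplus α h v i - dm * dminus α N h v i + ep * dplus β h v i + em * dminus β N h v i

open Function

-- `∏_{j=1}^n (1 - γ/j) = (-1)^n (γ-1 choose n)`, the partial sums of the `g_k^{(γ)}`.
noncomputable def binomProd (γ : ℝ) (n : ℕ) : ℝ := ∏ j ∈ range n, (1 - γ / (j + 1))

lemma binomProd_succ (γ : ℝ) (n : ℕ) : binomProd γ (n + 1) = binomProd γ n * (1 - γ / (n + 1)) :=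
  prod_range_succ _ _

lemma binomProd_nonneg {γ : ℝ} (hγ : γ ≤ 1) (n : ℕ) : 0 ≤ binomProd γ n :=
  prod_nonneg fun j _ => sub_nonneg.2 <| (div_le_one (by positivity)).2 <| by
    linarith [(j.cast_nonneg : (0 : ℝ) ≤ j)]

lemma binomProd_succ_eq (γ : ℝ) (n : ℕ) :
    binomProd γ (n + 1) = (1 - γ) / (n + 1) * binomProd (γ - 1) n := by
  induction n with
  | zero => simp [binomProd]
  | succ n ih =>
    rw [binomProd_succ, ih, binomProd_succ]
    push_cast
    field_simp
    ring

lemma gcoef_succ (γ : ℝ) (n : ℕ) : gcoef γ (n + 1) = -(γ / (n + 1)) * binomProd γ n := by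
  induction n with
  | zero => simp [gcoef, binomProd]
  | succ n ih =>
    rw [gcoef, ih, binomProd_succ]
    push_cast
    field_simp
    ring

lemma sum_range_succ_gcoef (γ : ℝ) (n : ℕ) :
    ∑ k ∈ range (n + 1), gcoef γ k = binomProd γ n := by
  induction n with
  | zero => simp [gcoef, binomProd]
  | succ n ih =>
    rw [sum_range_succ, ih, gcoef_succ, binomProd_succ]
    ring

lemma sum_range_wcoef (γ : ℝ) (n : ℕ) :
    ∑ k ∈ range (n + 2), wcoef γ k = γ / 2 * binomProd γ (n + 1) + (2 - γ) / 2 * binomProd γ n := by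
  rw [sum_range_succ', ← sum_range_succ_gcoef, ← sum_range_succ_gcoef]
  simp only [wcoef, sum_add_distrib, ← mul_sum, sum_range_succ' (gcoef γ) (n + 1)]
  ring

lemma wcoef_zero_add_wcoef_two (γ : ℝ) : wcoef γ 0 + wcoef γ 2 = γ * (γ + 2) * (γ - 1) / 4 := by
  simp only [wcoef, gcoef]
  ring

lemma wcoef_nonpos {γ : ℝ} (hγ0 : 0 ≤ γ) (hγ1 : γ ≤ 1) (k : ℕ) : wcoef γ (k + 2) ≤ 0 := by
  have hg : ∀ n, gcoef γ (n + 1) ≤ 0 := fun n => by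
    rw [gcoef_succ]
    exact mul_nonpos_of_nonpos_of_nonneg (by simp only [neg_nonpos]; positivity)
      (binomProd_nonneg hγ1 n)
  rw [wcoef]
  nlinarith [hg k, hg (k + 1)]

lemma wcoef_nonneg {γ : ℝ} (hγ1 : 1 ≤ γ) (hγ2 : γ ≤ 2) (k : ℕ) : 0 ≤ wcoef γ (k + 3) := by
  have hg : ∀ n, 0 ≤ gcoef γ (n + 2) := fun n => by
    rw [gcoef_succ, binomProd_succ_eq]
    exact mul_nonneg_of_nonpos_of_nonpos (by simp only [neg_nonpos]; positivity)
      (mul_nonpos_of_nonpos_of_nonneg (div_nonpos_of_nonpos_of_nonneg (by linarith) (by positivity))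
        (binomProd_nonneg (by linarith) n))
  rw [wcoef]
  nlinarith [hg k, hg (k + 1)]

lemma one_sub_mul_rpow_le_binomProd {γ : ℝ} (hγ0 : 0 ≤ γ) (hγ1 : γ ≤ 1) {n : ℕ} (hn : 1 ≤ n) :
    (1 - γ) * (n : ℝ) ^ (-γ) ≤ binomProd γ n := by
  induction n, hn using Nat.le_induction with
  | base => simp [binomProd]
  | succ n hn ih =>
    have hn0 : (0 : ℝ) < n := by exact_mod_cast hn
    have hbern : ((n : ℝ) / (n + 1)) ^ γ ≤ 1 - γ / (n + 1) := by
      have := rpow_one_add_le_one_add_mul_self (s := -(1 / ((n : ℝ) + 1)))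
        (by rw [neg_le_neg_iff, div_le_one (by positivity)]; linarith) hγ0 hγ1
      convert this using 2 <;> field_simp <;> ring
    have hshift : ((n : ℝ) + 1) ^ (-γ) = (n : ℝ) ^ (-γ) * ((n : ℝ) / (n + 1)) ^ γ := by
      rw [Real.div_rpow hn0.le (by positivity), Real.rpow_neg hn0.le, Real.rpow_neg (by positivity)]
      field_simp
    rw [binomProd_succ, Nat.cast_succ, hshift, ← mul_assoc]
    have hfac : 0 ≤ 1 - γ / ((n : ℝ) + 1) := by
      rw [sub_nonneg, div_le_one (by positivity)]; linarith
    have hpow : 0 ≤ (1 - γ) * (n : ℝ) ^ (-γ) := mul_nonneg (by linarith) (by positivity)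
    calc (1 - γ) * (n : ℝ) ^ (-γ) * ((n : ℝ) / (n + 1)) ^ γ
        ≤ (1 - γ) * (n : ℝ) ^ (-γ) * (1 - γ / (n + 1)) := mul_le_mul_of_nonneg_left hbern hpow
      _ ≤ binomProd γ n * (1 - γ / (n + 1)) := mul_le_mul_of_nonneg_right ih hfac

lemma binomProd_le_neg_rpow {γ : ℝ} (hγ1 : 1 ≤ γ) (hγ2 : γ ≤ 2) {n : ℕ} (hn : 2 ≤ n) :
    binomProd γ n ≤ -((γ - 1) * (2 - γ)) * (n : ℝ) ^ (-γ) := by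
  obtain ⟨m, rfl⟩ : ∃ m, n = m + 1 := ⟨n - 1, by omega⟩
  have hm0 : (0 : ℝ) < m := by exact_mod_cast (show 0 < m by omega)
  have hP : (2 - γ) * ((m : ℝ) + 1) ^ (-(γ - 1)) ≤ binomProd (γ - 1) m := by
    have h := one_sub_mul_rpow_le_binomProd (γ := γ - 1) (by linarith) (by linarith) (n := m)
      (by omega)
    rw [show 1 - (γ - 1) = 2 - γ by ring] at h
    refine le_trans (mul_le_mul_of_nonneg_left ?_ (by linarith)) h
    exact Real.rpow_le_rpow_of_nonpos hm0 (by linarith) (by linarith)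
  have hpow : ((m : ℝ) + 1) ^ (-γ) = ((m : ℝ) + 1)⁻¹ * ((m : ℝ) + 1) ^ (-(γ - 1)) := by
    rw [← Real.rpow_neg_one, ← Real.rpow_add (by positivity)]
    ring_nf
  rw [binomProd_succ_eq, Nat.cast_succ, hpow]
  calc (1 - γ) / (m + 1) * binomProd (γ - 1) m
      ≤ (1 - γ) / (m + 1) * ((2 - γ) * ((m : ℝ) + 1) ^ (-(γ - 1))) :=
        mul_le_mul_of_nonpos_left hP (div_nonpos_of_nonpos_of_nonneg (by linarith) (by positivity))
    _ = _ := by field_simp; ring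

lemma mul_rpow_le_sum_wcoef {γ : ℝ} (hγ0 : 0 ≤ γ) (hγ1 : γ ≤ 1) {N : ℕ} (hN : 1 ≤ N) :
    γ * (1 - γ) / 2 * (N : ℝ) ^ (-γ) ≤ ∑ k ∈ range (N + 1), wcoef γ k := by
  obtain ⟨l, rfl⟩ : ∃ l, N = l + 1 := ⟨N - 1, by omega⟩
  rw [sum_range_wcoef]
  have h1 := one_sub_mul_rpow_le_binomProd hγ0 hγ1 hN
  have h2 := binomProd_nonneg hγ1 l
  nlinarith [mul_le_mul_of_nonneg_left h1 (by linarith : 0 ≤ γ / 2),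
    mul_nonneg (by linarith : (0 : ℝ) ≤ (2 - γ) / 2) h2]

lemma sum_wcoef_le_neg_mul_rpow {γ : ℝ} (hγ1 : 1 ≤ γ) (hγ2 : γ ≤ 2) {N : ℕ} (hN : 3 ≤ N) :
    ∑ k ∈ range (N + 1), wcoef γ k ≤ -((γ - 1) * (2 - γ) ^ 2 / 2) * (N : ℝ) ^ (-γ) := by
  obtain ⟨l, rfl⟩ : ∃ l, N = l + 1 := ⟨N - 1, by omega⟩
  rw [sum_range_wcoef]
  have h1 : binomProd γ (l + 1) ≤ 0 := by
    rw [binomProd_succ_eq]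
    exact mul_nonpos_of_nonpos_of_nonneg
      (div_nonpos_of_nonpos_of_nonneg (by linarith) (by positivity))
      (binomProd_nonneg (by linarith) l)
  have h2 := binomProd_le_neg_rpow hγ1 hγ2 (n := l) (by omega)
  have h3 : ((l + 1 : ℕ) : ℝ) ^ (-γ) ≤ (l : ℝ) ^ (-γ) :=
    Real.rpow_le_rpow_of_nonpos (by exact_mod_cast (show 0 < l by omega)) (by push_cast; linarith)
      (by linarith)
  have hc : 0 ≤ (γ - 1) * (2 - γ) ^ 2 / 2 := by positivity
  nlinarith [mul_le_mul_of_nonneg_left h2 (by linarith : (0 : ℝ) ≤ (2 - γ) / 2),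
    mul_le_mul_of_nonneg_left h3 hc, mul_nonpos_of_nonneg_of_nonpos (by linarith : 0 ≤ γ / 2) h1]

lemma sum_mul_le_sum_mul_apply_one {c φ : ℕ → ℝ} {n : ℕ} (hn : 3 ≤ n) (hc02 : 0 ≤ c 0 + c 2)
    (hc : ∀ k, 3 ≤ k → 0 ≤ c k) (hφ02 : φ 0 = φ 2) (hφ : ∀ k, φ k ≤ φ 1) :
    ∑ k ∈ range n, c k * φ k ≤ (∑ k ∈ range n, c k) * φ 1 := by
  obtain ⟨m, rfl⟩ : ∃ m, n = 3 + m := ⟨n - 3, by omega⟩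
  rw [sum_mul, ← sub_nonneg, ← sum_sub_distrib, sum_range_add]
  have hhead : ∑ k ∈ range 3, (c k * φ 1 - c k * φ k) = (c 0 + c 2) * (φ 1 - φ 0) := by
    simp only [sum_range_succ, sum_range_zero, hφ02]
    ring
  have htail : 0 ≤ ∑ k ∈ range m, (c (3 + k) * φ 1 - c (3 + k) * φ (3 + k)) :=
    sum_nonneg fun k _ => by
      rw [← mul_sub]
      exact mul_nonneg (hc _ (by omega)) (sub_nonneg.2 (hφ _))
  rw [hhead]
  exact add_nonneg (mul_nonneg hc02 (sub_nonneg.2 (hφ 0))) htail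

noncomputable def autocorr (w : ℤ → ℝ) (d : ℤ) : ℝ := ∑ᶠ i, w (i + d) * w i

lemma autocorr_neg (w : ℤ → ℝ) (d : ℤ) : autocorr w (-d) = autocorr w d := by
  rw [autocorr, ← finsum_comp_equiv (Equiv.addRight d)]
  simp only [Equiv.coe_addRight, add_neg_cancel_right, autocorr, mul_comm]

lemma autocorr_le_autocorr_zero {w : ℤ → ℝ} (hw : HasFiniteSupport w) (d : ℤ) :
    autocorr w d ≤ autocorr w 0 := by
  have hwd : HasFiniteSupport fun i => w (i + d) * w (i + d) :=
    (hw.comp_of_injective (add_left_injective d)).fun_mul_left _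
  have hw0 : HasFiniteSupport fun i => w i * w i := hw.fun_mul_left _
  have hshift : ∑ᶠ i, w (i + d) * w (i + d) = autocorr w 0 := by
    simpa [autocorr] using finsum_comp_equiv (Equiv.addRight d) (f := fun i => w i * w i)
  suffices 2 * autocorr w d ≤ 2 * autocorr w 0 by linarith
  calc 2 * autocorr w d = ∑ᶠ i, 2 * (w (i + d) * w i) := mul_finsum _ _
    _ ≤ ∑ᶠ i, (w (i + d) * w (i + d) + w i * w i) := by
        refine finsum_le_finsum' ((hw.fun_mul_right _).fun_mul_right _) (hwd.fun_add hw0)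
          fun i => ?_
        nlinarith [sq_nonneg (w (i + d) - w i)]
    _ = 2 * autocorr w 0 := by
        rw [finsum_add_distrib hwd hw0, hshift]
        simp only [autocorr, add_zero]
        ring

lemma autocorr_zero_nonneg (w : ℤ → ℝ) : 0 ≤ autocorr w 0 :=
  finsum_nonneg fun i => by rw [add_zero]; exact mul_self_nonneg _

section autocorrBounds

variable {w : ℤ → ℝ} {N : ℕ}

lemma mul_autocorr_zero_le_sum_wcoef_mul_autocorr {γ : ℝ} (hγ0 : 0 ≤ γ) (hγ1 : γ ≤ 1)
    (hw : HasFiniteSupport w) (hN : 2 ≤ N) :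
    γ * (1 - γ) / 2 * (N : ℝ) ^ (-γ) * autocorr w 0 ≤
      ∑ k ∈ range (N + 1), wcoef γ k * autocorr w (1 - k) := by
  have key := sum_mul_le_sum_mul_apply_one (n := N + 1) (c := fun k => -wcoef γ k)
    (φ := fun k : ℕ => autocorr w (1 - k)) (by omega)
    (by
      rw [← neg_add, wcoef_zero_add_wcoef_two, neg_nonneg]
      exact div_nonpos_of_nonpos_of_nonneg
        (mul_nonpos_of_nonneg_of_nonpos (by positivity) (by linarith)) (by norm_num))
    (fun k hk => by
      obtain ⟨j, rfl⟩ : ∃ j, k = j + 2 := ⟨k - 2, by omega⟩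
      exact neg_nonneg.2 (wcoef_nonpos hγ0 hγ1 j))
    (by norm_num [autocorr_neg]) fun k => by simpa using autocorr_le_autocorr_zero hw _
  simp only [neg_mul, sum_neg_distrib, neg_le_neg_iff] at key
  calc γ * (1 - γ) / 2 * (N : ℝ) ^ (-γ) * autocorr w 0
      ≤ (∑ k ∈ range (N + 1), wcoef γ k) * autocorr w 0 :=
        mul_le_mul_of_nonneg_right (mul_rpow_le_sum_wcoef hγ0 hγ1 (by omega))
          (autocorr_zero_nonneg w)
    _ ≤ _ := by simpa using key

lemma sum_wcoef_mul_autocorr_le_neg_mul_autocorr_zero {γ : ℝ} (hγ1 : 1 ≤ γ) (hγ2 : γ ≤ 2)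
    (hw : HasFiniteSupport w) (hN : 3 ≤ N) :
    ∑ k ∈ range (N + 1), wcoef γ k * autocorr w (1 - k) ≤
      -((γ - 1) * (2 - γ) ^ 2 / 2) * (N : ℝ) ^ (-γ) * autocorr w 0 := by
  have key := sum_mul_le_sum_mul_apply_one (n := N + 1) (c := wcoef γ)
    (φ := fun k : ℕ => autocorr w (1 - k)) (by omega)
    (by
      rw [wcoef_zero_add_wcoef_two]
      have : 0 ≤ γ - 1 := by linarith
      positivity)
    (fun k hk => by
      obtain ⟨j, rfl⟩ : ∃ j, k = j + 3 := ⟨k - 3, by omega⟩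
      exact wcoef_nonneg hγ1 hγ2 j)
    (by norm_num [autocorr_neg]) fun k => by simpa using autocorr_le_autocorr_zero hw _
  calc ∑ k ∈ range (N + 1), wcoef γ k * autocorr w (1 - k)
      ≤ (∑ k ∈ range (N + 1), wcoef γ k) * autocorr w 0 := by simpa using key
    _ ≤ _ := mul_le_mul_of_nonneg_right (sum_wcoef_le_neg_mul_rpow hγ1 hγ2 hN)
          (autocorr_zero_nonneg w)

end autocorrBounds

noncomputable def zeroExtend (N : ℕ) (v : ℕ → ℝ) (j : ℤ) : ℝ :=
  if j ∈ Set.Ioo 0 (N : ℤ) then v j.toNat else 0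

section zeroExtend

variable {N : ℕ} {v : ℕ → ℝ}

lemma zeroExtend_of_notMem {j : ℤ} (hj : j ∉ Set.Ioo 0 (N : ℤ)) : zeroExtend N v j = 0 :=
  if_neg hj

lemma support_zeroExtend_subset : support (zeroExtend N v) ⊆ Set.Ioo 0 (N : ℤ) :=
  fun _ hj => by_contra fun h => hj (zeroExtend_of_notMem h)

lemma hasFiniteSupport_zeroExtend : HasFiniteSupport (zeroExtend N v) :=
  (Set.finite_Ioo _ _).subset support_zeroExtend_subset

lemma zeroExtend_natCast_of_lt {i : ℕ} (hi0 : 0 < i) (hiN : i < N) : zeroExtend N v i = v i := by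
  rw [zeroExtend, if_pos (by simp only [Set.mem_Ioo]; omega), Int.toNat_natCast]

lemma zeroExtend_natCast (hv0 : v 0 = 0) (hvN : v N = 0) {i : ℕ} (hi : i ≤ N) :
    zeroExtend N v i = v i := by
  rcases Nat.eq_zero_or_pos i with rfl | hi0
  · simp [zeroExtend, hv0]
  rcases hi.lt_or_eq with hiN | rfl
  · exact zeroExtend_natCast_of_lt hi0 hiN
  · simp [zeroExtend, hvN]

end zeroExtend

lemma sum_Icc_eq_finsum {N : ℕ} {f : ℤ → ℝ} (hf : support f ⊆ Set.Ioo 0 (N : ℤ)) :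
    ∑ i ∈ Icc 1 (N - 1), f i = ∑ᶠ j, f j := by
  rw [finsum_eq_finsetSum_of_support_subset f (s := (Icc 1 (N - 1)).map Nat.castEmbedding),
    sum_map]
  · rfl
  intro j hj
  obtain ⟨hj0, hjN⟩ := hf hj
  simp only [coe_map, Set.mem_image, coe_Icc, Set.mem_Icc, Nat.castEmbedding_apply]
  exact ⟨j.toNat, by omega, by omega⟩

lemma sum_sum_shift_mul_eq_autocorr {N : ℕ} {w : ℤ → ℝ} (hw : support w ⊆ Set.Ioo 0 (N : ℤ))
    (c : ℕ → ℝ) (s : ℕ → ℤ) (n : ℕ) :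
    ∑ i ∈ Icc 1 (N - 1), (∑ k ∈ range n, c k * w (i + s k)) * w i =
      ∑ k ∈ range n, c k * autocorr w (s k) := by
  simp only [sum_mul, mul_assoc]
  rw [sum_comm]
  refine sum_congr rfl fun k _ => ?_
  rw [← mul_sum, autocorr, sum_Icc_eq_finsum (f := fun j => w (j + s k) * w j)
    fun j hj => hw (support_mul_subset_right _ _ hj)]

section gridOperators

variable {N : ℕ} {v : ℕ → ℝ}

lemma dplus_eq_sum_zeroExtend (hv0 : v 0 = 0) (hvN : v N = 0) {i : ℕ} (hi : i < N) (γ h : ℝ) :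
    dplus γ h v i = h ^ (-γ) * ∑ k ∈ range (N + 1), wcoef γ k * zeroExtend N v (i + (1 - k)) := by
  rw [dplus]
  congr 1
  refine sum_subset_zero_on_sdiff (range_subset_range.2 (by omega)) (fun k hk => ?_) fun k hk => ?_
  · simp only [mem_sdiff, mem_range] at hk
    rw [zeroExtend_of_notMem (by simp only [Set.mem_Ioo]; omega), mul_zero]
  · simp only [mem_range] at hk
    rw [← zeroExtend_natCast hv0 hvN (by omega : i + 1 - k ≤ N)]
    congr 2
    omega

lemma dminus_eq_sum_zeroExtend (hv0 : v 0 = 0) (hvN : v N = 0) {i : ℕ} (hi0 : 0 < i)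
    (hiN : i ≤ N) (γ h : ℝ) :
    dminus γ N h v i = h ^ (-γ) * ∑ k ∈ range (N + 1), wcoef γ k * zeroExtend N v (i + (k - 1)) := by
  rw [dminus]
  congr 1
  refine sum_subset_zero_on_sdiff (range_subset_range.2 (by omega)) (fun k hk => ?_) fun k hk => ?_
  · simp only [mem_sdiff, mem_range] at hk
    rw [zeroExtend_of_notMem (by simp only [Set.mem_Ioo]; omega), mul_zero]
  · simp only [mem_range] at hk
    rw [← zeroExtend_natCast hv0 hvN (by omega : i + k - 1 ≤ N)]
    congr 2
    omega

lemma ip_self_eq (h : ℝ) : ip N h v v = h * autocorr (zeroExtend N v) 0 := by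
  rw [ip, autocorr, ← sum_Icc_eq_finsum (f := fun j => zeroExtend N v (j + 0) * zeroExtend N v j)
    fun j hj => support_zeroExtend_subset (support_mul_subset_right _ _ hj)]
  congr 1
  refine sum_congr rfl fun i hi => ?_
  simp only [mem_Icc] at hi
  rw [add_zero, zeroExtend_natCast_of_lt (by omega) (by omega)]

lemma ip_eq_sum_wcoef_mul_autocorr {u : ℕ → ℝ} {γ h : ℝ} (s : ℕ → ℤ)
    (hu : ∀ i, 0 < i → i < N →
      u i = h ^ (-γ) * ∑ k ∈ range (N + 1), wcoef γ k * zeroExtend N v (i + s k)) :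
    ip N h u v =
      h * h ^ (-γ) * ∑ k ∈ range (N + 1), wcoef γ k * autocorr (zeroExtend N v) (s k) := by
  rw [ip, mul_assoc, ← sum_sum_shift_mul_eq_autocorr support_zeroExtend_subset (wcoef γ) s]
  congr 1
  rw [mul_sum]
  refine sum_congr rfl fun i hi => ?_
  simp only [mem_Icc] at hi
  rw [hu i (by omega) (by omega), zeroExtend_natCast_of_lt (by omega) (by omega), mul_assoc]

lemma ip_dplus_eq (hv0 : v 0 = 0) (hvN : v N = 0) (γ h : ℝ) :
    ip N h (dplus γ h v) v =
      h * h ^ (-γ) * ∑ k ∈ range (N + 1), wcoef γ k * autocorr (zeroExtend N v) (1 - k) :=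
  ip_eq_sum_wcoef_mul_autocorr (fun k => 1 - k) fun _ _ hi => dplus_eq_sum_zeroExtend hv0 hvN hi γ h

lemma ip_dminus_eq_ip_dplus (hv0 : v 0 = 0) (hvN : v N = 0) (γ h : ℝ) :
    ip N h (dminus γ N h v) v = ip N h (dplus γ h v) v := by
  rw [ip_dplus_eq hv0 hvN, ip_eq_sum_wcoef_mul_autocorr (fun k => k - 1)
    fun _ hi0 hi => dminus_eq_sum_zeroExtend hv0 hvN hi0 hi.le γ h]
  simp only [← autocorr_neg _ ((_ : ℤ) - 1), neg_sub]

end gridOperators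

lemma rpow_eq_div_rpow_mul_rpow {L : ℝ} {N : ℕ} (hL : 0 ≤ L) (hN : N ≠ 0) (γ : ℝ) :
    L ^ γ = (L / N) ^ γ * (N : ℝ) ^ γ := by
  rw [← Real.mul_rpow (by positivity) (by positivity), div_mul_cancel₀ L (by exact_mod_cast hN)]

section innerProduct

variable {N : ℕ} {v : ℕ → ℝ}

lemma gnorm_sq {h : ℝ} (hh : 0 ≤ h) : gnorm N h v ^ 2 = ip N h v v :=
  Real.sq_sqrt (mul_nonneg hh (sum_nonneg fun i _ => mul_self_nonneg (v i)))

lemma ip_dop_eq (α β : ℝ) (h dp dm ep em : ℝ) :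
    ip N h (dop α β N h dp dm ep em v) v =
      -dp * ip N h (dplus α h v) v - dm * ip N h (dminus α N h v) v +
        ep * ip N h (dplus β h v) v + em * ip N h (dminus β N h v) v := by
  simp only [ip, dop, add_mul, sub_mul, sum_add_distrib, sum_sub_distrib, mul_assoc, ← mul_sum]
  ring

lemma mul_ip_self_le_ip_dplus {α L : ℝ} (hα0 : 0 ≤ α) (hα1 : α ≤ 1) (hL : 0 ≤ L) (hN : 2 ≤ N)
    (hv0 : v 0 = 0) (hvN : v N = 0) :
    α * (1 - α) / 2 * L ^ (-α) * ip N (L / N) v v ≤ ip N (L / N) (dplus α (L / N) v) v := by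
  rw [ip_dplus_eq hv0 hvN, ip_self_eq, rpow_eq_div_rpow_mul_rpow (N := N) hL (by omega)]
  calc α * (1 - α) / 2 * ((L / N) ^ (-α) * (N : ℝ) ^ (-α)) * (L / N * autocorr (zeroExtend N v) 0)
      = L / N * (L / N) ^ (-α) *
          (α * (1 - α) / 2 * (N : ℝ) ^ (-α) * autocorr (zeroExtend N v) 0) := by ring
    _ ≤ _ := mul_le_mul_of_nonneg_left
        (mul_autocorr_zero_le_sum_wcoef_mul_autocorr hα0 hα1 hasFiniteSupport_zeroExtend hN)
        (by positivity)

lemma ip_dplus_le_neg_mul_ip_self {β L : ℝ} (hβ1 : 1 ≤ β) (hβ2 : β ≤ 2) (hL : 0 ≤ L) (hN : 3 ≤ N)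
    (hv0 : v 0 = 0) (hvN : v N = 0) :
    ip N (L / N) (dplus β (L / N) v) v ≤
      -((β - 1) * (2 - β) ^ 2 / 2 * L ^ (-β)) * ip N (L / N) v v := by
  rw [ip_dplus_eq hv0 hvN, ip_self_eq, rpow_eq_div_rpow_mul_rpow (N := N) hL (by omega)]
  calc L / N * (L / N) ^ (-β) * ∑ k ∈ range (N + 1), wcoef β k * autocorr (zeroExtend N v) (1 - k)
      ≤ L / N * (L / N) ^ (-β) *
          (-((β - 1) * (2 - β) ^ 2 / 2) * (N : ℝ) ^ (-β) * autocorr (zeroExtend N v) 0) :=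
        mul_le_mul_of_nonneg_left
          (sum_wcoef_mul_autocorr_le_neg_mul_autocorr_zero hβ1 hβ2 hasFiniteSupport_zeroExtend hN)
          (by positivity)
    _ = _ := by ring

end innerProduct

theorem stmt15 (α β L dp dm ep em : ℝ)
    (hα0 : 0 < α) (hα1 : α < 1) (hβ1 : 1 < β) (hβ2 : β < 2) (hL : 0 < L)
    (hdp : 0 ≤ dp) (hdm : 0 ≤ dm) (hep : 0 ≤ ep) (hem : 0 ≤ em)
    (hpos : 0 < dp + dm + ep + em) :
    ∃ c : ℝ, 0 < c ∧ ∀ N : ℕ, 3 ≤ N → ∀ v : ℕ → ℝ,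
      v 0 = 0 → v N = 0 →
      ip N (L / N) (dop α β N (L / N) dp dm ep em v) v ≤
        -(c * Real.log 2) * (gnorm N (L / N) v) ^ 2 := by
  set a := α * (1 - α) / 2 * L ^ (-α)
  set b := (β - 1) * (2 - β) ^ 2 / 2 * L ^ (-β)
  have ha : 0 < a := by
    have : 0 < 1 - α := by linarith
    positivity
  have hb : 0 < b := by
    have : 0 < β - 1 := by linarith
    have : 0 < 2 - β := by linarith
    positivity
  have hK : 0 < (dp + dm) * a + (ep + em) * b := by
    nlinarith [mul_pos hpos (lt_min ha hb), min_le_left a b, min_le_right a b]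
  have hlog : 0 < Real.log 2 := Real.log_pos one_lt_two
  refine ⟨((dp + dm) * a + (ep + em) * b) / Real.log 2, div_pos hK hlog, fun N hN v hv0 hvN => ?_⟩
  have hα : a * ip N (L / N) v v ≤ ip N (L / N) (dplus α (L / N) v) v :=
    mul_ip_self_le_ip_dplus hα0.le hα1.le hL.le (by omega) hv0 hvN
  have hβ : ip N (L / N) (dplus β (L / N) v) v ≤ -b * ip N (L / N) v v :=
    ip_dplus_le_neg_mul_ip_self hβ1.le hβ2.le hL.le hN hv0 hvN
  rw [div_mul_cancel₀ _ hlog.ne', gnorm_sq (by positivity), ip_dop_eq,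
    ip_dminus_eq_ip_dplus hv0 hvN, ip_dminus_eq_ip_dplus hv0 hvN]
  nlinarith [mul_le_mul_of_nonneg_left hα (add_nonneg hdp hdm),
    mul_le_mul_of_nonneg_left hβ (add_nonneg hep hem)]
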